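/- If player II has a winning strategy in the game $\mathfrak G(X,Y,n-1,\epsilon/2)$ and $Y$ satisfies the $\epsilon/2$-extension property for all one-point extensions of $(n-1)$-point configurations in $\mathcal C$ (and symmetrically $X$), then player II has a winning strategy in $\mathfrak G(X,Y,n,\epsilon)$. -/

import Mathlib

/-- A configuration from the class `𝒞`: a finite metric space on `m` points with all
distances between distinct points in `[1/2,1]`. -/
def IsCConfig (m : ℕ) (dX : Fin m → Fin m → ℝ) : Prop :=
  (∀ i j, dX i j = dX j i) ∧ (∀ i, dX i i = 0) ∧
    ∀ i j, i ≠ j → dX i j ∈ Set.Icc (1/2 : ℝ) 1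

/-- The one-point extension property of a metric space `Z` (with error doubling):
for every configuration `X₀` from `𝒞`, every one-point extension `Y₀ = X₀ ∪ {y}` in `𝒞`
(given by the distances `dy i` from the new point), every `ε > 0`, and every tuple in `Z`
realizing `X₀` up to error `ε`, some point of `Z` extends it to a realization of `Y₀`
up to error `2ε`. -/
def ExtensionProperty (Z : Type*) [MetricSpace Z] : Prop :=
  ∀ (m : ℕ) (dX : Fin m → Fin m → ℝ) (dy : Fin m → ℝ),
    IsCConfig m dX → (∀ i, dy i ∈ Set.Icc (1/2 : ℝ) 1) →
    ∀ ε : ℝ, 0 < ε → ∀ z : Fin m → Z,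
      (∀ i j, i ≠ j → |dist (z i) (z j) - dX i j| < ε) →
      ∃ w : Z, (∀ i, |dist (z i) w - dy i| < 2 * ε) ∧
        (∀ i j, i ≠ j → |dist (z i) (z j) - dX i j| < 2 * ε)

/-- The set of histories (lists of pairs, most recent first) reachable in `n` rounds of
the Ehrenfeucht–Fraïssé game when player II plays according to the strategy
`(σX, σY)`: in each round player I picks a point of `X` (answered by `σX`) or a point
of `Y` (answered by `σY`). -/
def efPlays {X Y : Type*} (σX : List (X × Y) → X → Y) (σY : List (X × Y) → Y → X) :
    ℕ → Set (List (X × Y))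
  | 0 => {[]}
  | n + 1 => {h' | ∃ h ∈ efPlays σX σY n,
      (∃ a : X, h' = (a, σX h a) :: h) ∨ (∃ b : Y, h' = (σY h b, b) :: h)}

/-- Player II has a winning strategy in the `n`-round game `𝔊(X,Y,n,ε)`: a strategy all
of whose complete plays produce tuples with `|d_X(a_i,a_j) - d_Y(b_i,b_j)| < ε`. -/
def IIWins (X Y : Type*) [MetricSpace X] [MetricSpace Y] (n : ℕ) (ε : ℝ) : Prop :=
  ∃ (σX : List (X × Y) → X → Y) (σY : List (X × Y) → Y → X),
    ∀ h ∈ efPlays σX σY n, ∀ p ∈ h, ∀ q ∈ h,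
      |dist p.1 q.1 - dist p.2 q.2| < ε

/-!
Let II follow a winning strategy of `𝔊(X,Y,n-1,ε/2)` for the first `n-1` rounds, so that the
position reached is an `ε/2`-partial isometry. Its pairs have distinct first coordinates (two
pairs sharing one have second coordinates closer than `1/2`, hence equal), so if in the last
round I plays a point `a ∈ X` not yet played, these coordinates form a configuration from `𝒞`,
and the extension property of `Y` yields an answer `b` with error `2 · ε/2 = ε`; a move in `Y`
is answered symmetrically. For `ε > 1` there is nothing to prove, since all distances lie in
`[0,1]`.
-/

section

variable {X Y : Type*}

lemma length_of_mem_efPlays {σX : List (X × Y) → X → Y} {σY : List (X × Y) → Y → X} :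
    ∀ {k : ℕ} {h : List (X × Y)}, h ∈ efPlays σX σY k → h.length = k
  | 0, h, hh => by rw [Set.mem_singleton_iff.mp hh]; rfl
  | k + 1, _, ⟨h, hh, hc⟩ => by
    rcases hc with ⟨a, rfl⟩ | ⟨b, rfl⟩ <;> simp [length_of_mem_efPlays hh]

lemma efPlays_congr {σX σX' : List (X × Y) → X → Y} {σY σY' : List (X × Y) → Y → X} :
    ∀ {k : ℕ}, (∀ h : List (X × Y), h.length < k → σX' h = σX h ∧ σY' h = σY h) →
      efPlays σX' σY' k = efPlays σX σY k
  | 0, _ => rfl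
  | k + 1, hσ => by
    have hk : efPlays σX' σY' k = efPlays σX σY k :=
      efPlays_congr fun h hh => hσ h (Nat.lt_succ_of_lt hh)
    ext h'
    simp only [efPlays, hk]
    refine exists_congr fun h => and_congr_right fun hh => ?_
    obtain ⟨hX, hY⟩ := hσ h (by rw [length_of_mem_efPlays hh]; exact Nat.lt_succ_self k)
    rw [hX, hY]

variable [MetricSpace X] [MetricSpace Y]

def IsPartialIsometry (ε : ℝ) (h : List (X × Y)) : Prop :=
  ∀ p ∈ h, ∀ q ∈ h, |dist p.1 q.1 - dist p.2 q.2| < ε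

namespace IsPartialIsometry

variable {ε δ : ℝ} {h : List (X × Y)}

lemma mono (hh : IsPartialIsometry δ h) (hδε : δ ≤ ε) : IsPartialIsometry ε h :=
  fun p hp q hq => (hh p hp q hq).trans_le hδε

lemma of_one_lt (hX : ∀ x x' : X, x ≠ x' → dist x x' ∈ Set.Icc (1/2 : ℝ) 1)
    (hY : ∀ y y' : Y, y ≠ y' → dist y y' ∈ Set.Icc (1/2 : ℝ) 1) (hε : 1 < ε)
    (h : List (X × Y)) : IsPartialIsometry ε h := by
  intro p _ q _
  have hdX : dist p.1 q.1 ≤ 1 := by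
    rcases eq_or_ne p.1 q.1 with he | hne
    · simp [he]
    · exact (hX _ _ hne).2
  have hdY : dist p.2 q.2 ≤ 1 := by
    rcases eq_or_ne p.2 q.2 with he | hne
    · simp [he]
    · exact (hY _ _ hne).2
  rw [abs_sub_lt_iff]
  constructor <;> linarith [dist_nonneg (x := p.1) (y := q.1), dist_nonneg (x := p.2) (y := q.2)]

lemma cons {a : X} {b : Y} (hh : IsPartialIsometry ε h) (hε : 0 < ε)
    (hab : ∀ p ∈ h, |dist p.1 a - dist p.2 b| < ε) : IsPartialIsometry ε ((a, b) :: h) := by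
  intro p hp q hq
  rcases List.mem_cons.mp hp with rfl | hp <;> rcases List.mem_cons.mp hq with rfl | hq
  · simpa using hε
  · rw [dist_comm a, dist_comm b]
    exact hab q hq
  · exact hab p hp
  · exact hh p hp q hq

lemma map_swap_iff : IsPartialIsometry ε (h.map Prod.swap) ↔ IsPartialIsometry ε h := by
  simp only [IsPartialIsometry, List.forall_mem_map, Prod.fst_swap, Prod.snd_swap]
  exact forall₂_congr fun p _ => forall₂_congr fun q _ => by rw [abs_sub_comm]

lemma injOn_fst (hY : ∀ y y' : Y, y ≠ y' → dist y y' ∈ Set.Icc (1/2 : ℝ) 1)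
    (hh : IsPartialIsometry ε h) (hε : ε ≤ 1/2) : Set.InjOn Prod.fst {p | p ∈ h} := by
  intro p hp q hq hpq
  refine Prod.ext hpq (by_contra fun hne => ?_)
  have hd := hh p hp q hq
  rw [hpq, dist_self, zero_sub, abs_neg, abs_of_nonneg dist_nonneg] at hd
  linarith [(hY _ _ hne).1]

end IsPartialIsometry

lemma ExtensionProperty.exists_extension (hYext : ExtensionProperty Y)
    (hX : ∀ x x' : X, x ≠ x' → dist x x' ∈ Set.Icc (1/2 : ℝ) 1)
    {δ : ℝ} (hδ : 0 < δ) {h : List (X × Y)} (hh : IsPartialIsometry δ h)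
    (hinj : Set.InjOn Prod.fst {p | p ∈ h}) {a : X} (ha : ∀ p ∈ h, p.1 ≠ a) :
    ∃ b : Y, ∀ p ∈ h, |dist p.1 a - dist p.2 b| < 2 * δ := by
  classical
  set s := h.toFinset
  let g : Fin s.card → X × Y := fun i => s.equivFin.symm i
  have hg : ∀ i, g i ∈ h := fun i => List.mem_toFinset.mp (s.equivFin.symm i).2
  have hfst : ∀ i j, i ≠ j → (g i).1 ≠ (g j).1 := fun i j hij he =>
    hij (s.equivFin.symm.injective (Subtype.ext (hinj (hg i) (hg j) he)))
  obtain ⟨b, hb, -⟩ := hYext s.card (fun i j => dist (g i).1 (g j).1) (fun i => dist (g i).1 a)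
    ⟨fun _ _ => dist_comm _ _, fun _ => dist_self _, fun i j hij => hX _ _ (hfst i j hij)⟩
    (fun i => hX _ _ (ha _ (hg i))) δ hδ (fun i => (g i).2)
    (fun i j _ => by rw [abs_sub_comm]; exact hh _ (hg i) _ (hg j))
  refine ⟨b, fun p hp => ?_⟩
  simpa [g, abs_sub_comm] using hb (s.equivFin ⟨p, List.mem_toFinset.mpr hp⟩)

namespace IsPartialIsometry

variable {ε : ℝ} {h : List (X × Y)}

lemma exists_extension_fst (hX : ∀ x x' : X, x ≠ x' → dist x x' ∈ Set.Icc (1/2 : ℝ) 1)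
    (hY : ∀ y y' : Y, y ≠ y' → dist y y' ∈ Set.Icc (1/2 : ℝ) 1) (hYext : ExtensionProperty Y)
    (hε : 0 < ε) (hε1 : ε ≤ 1) (hh : IsPartialIsometry (ε / 2) h) (a : X) :
    ∃ b : Y, IsPartialIsometry ε ((a, b) :: h) := by
  have hhε : IsPartialIsometry ε h := hh.mono (by linarith)
  by_cases hmem : ∃ p ∈ h, p.1 = a
  · obtain ⟨p, hp, rfl⟩ := hmem
    exact ⟨p.2, hhε.cons hε fun q hq => hhε q hq p hp⟩
  · push Not at hmem
    obtain ⟨b, hb⟩ := ExtensionProperty.exists_extension hYext hX (half_pos hε) hh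
      (hh.injOn_fst hY (by linarith)) hmem
    rw [mul_div_cancel₀ ε two_ne_zero] at hb
    exact ⟨b, hhε.cons hε hb⟩

lemma exists_extension_snd (hX : ∀ x x' : X, x ≠ x' → dist x x' ∈ Set.Icc (1/2 : ℝ) 1)
    (hY : ∀ y y' : Y, y ≠ y' → dist y y' ∈ Set.Icc (1/2 : ℝ) 1) (hXext : ExtensionProperty X)
    (hε : 0 < ε) (hε1 : ε ≤ 1) (hh : IsPartialIsometry (ε / 2) h) (b : Y) :
    ∃ a : X, IsPartialIsometry ε ((a, b) :: h) := by
  obtain ⟨a, ha⟩ := (map_swap_iff.mpr hh).exists_extension_fst hY hX hXext hε hε1 b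
  exact ⟨a, map_swap_iff.mp ha⟩

end IsPartialIsometry

/-- The new strategy follows the old one except in the last round. -/
lemma IIWins.succ {k : ℕ} {δ ε : ℝ} (hwin : IIWins X Y k δ)
    (hextX : ∀ h : List (X × Y), IsPartialIsometry δ h → ∀ a, ∃ b,
      IsPartialIsometry ε ((a, b) :: h))
    (hextY : ∀ h : List (X × Y), IsPartialIsometry δ h → ∀ b, ∃ a,
      IsPartialIsometry ε ((a, b) :: h)) :
    IIWins X Y (k + 1) ε := by
  classical
  obtain ⟨σX, σY, hσ⟩ := hwin
  choose fX hfX using hextX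
  choose fY hfY using hextY
  let σX' h a := if hh : h.length = k ∧ IsPartialIsometry δ h then fX h hh.2 a else σX h a
  let σY' h b := if hh : h.length = k ∧ IsPartialIsometry δ h then fY h hh.2 b else σY h b
  have hplays : efPlays σX' σY' k = efPlays σX σY k := efPlays_congr fun h hh => by
    have hne : ¬(h.length = k ∧ IsPartialIsometry δ h) := fun hk => hh.ne hk.1
    exact ⟨funext fun a => dif_neg hne, funext fun b => dif_neg hne⟩
  refine ⟨σX', σY', ?_⟩
  rintro _ ⟨h, hh, hc⟩
  rw [hplays] at hh
  have hpos : h.length = k ∧ IsPartialIsometry δ h := ⟨length_of_mem_efPlays hh, hσ h hh⟩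
  rcases hc with ⟨a, rfl⟩ | ⟨b, rfl⟩
  · rw [show σX' h a = fX h hpos.2 a from dif_pos hpos]
    exact hfX h hpos.2 a
  · rw [show σY' h b = fY h hpos.2 b from dif_pos hpos]
    exact hfY h hpos.2 b

lemma IIWins.of_one_lt {m n : ℕ} {δ ε : ℝ}
    (hX : ∀ x x' : X, x ≠ x' → dist x x' ∈ Set.Icc (1/2 : ℝ) 1)
    (hY : ∀ y y' : Y, y ≠ y' → dist y y' ∈ Set.Icc (1/2 : ℝ) 1)
    (hwin : IIWins X Y m δ) (hε : 1 < ε) : IIWins X Y n ε := by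
  obtain ⟨σX, σY, -⟩ := hwin
  exact ⟨σX, σY, fun h _ => IsPartialIsometry.of_one_lt hX hY hε h⟩

lemma IIWins.mono {n : ℕ} {δ ε : ℝ} (hwin : IIWins X Y n δ) (hδε : δ ≤ ε) : IIWins X Y n ε := by
  obtain ⟨σX, σY, hσ⟩ := hwin
  exact ⟨σX, σY, fun h hh => IsPartialIsometry.mono (hσ h hh) hδε⟩

end

/-- Inductive step: if player II has a winning strategy in `𝔊(X,Y,n-1,ε/2)` and both
`X` and `Y` (metric spaces with distinct-point distances in `[1/2,1]`) satisfy the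
one-point extension properties, then player II has a winning strategy in
`𝔊(X,Y,n,ε)`. -/
theorem stmt12 (X Y : Type*) [MetricSpace X] [MetricSpace Y]
    (hX : ∀ x x' : X, x ≠ x' → dist x x' ∈ Set.Icc (1/2 : ℝ) 1)
    (hY : ∀ y y' : Y, y ≠ y' → dist y y' ∈ Set.Icc (1/2 : ℝ) 1)
    (hXext : ExtensionProperty X) (hYext : ExtensionProperty Y)
    (n : ℕ) (ε : ℝ) (hε : 0 < ε)
    (hprev : IIWins X Y (n - 1) (ε / 2)) :
    IIWins X Y n ε := by
  obtain hε1 | hε1 := lt_or_ge 1 ε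
  · exact hprev.of_one_lt hX hY hε1
  cases n with
  | zero => exact hprev.mono (by linarith)
  | succ k =>
    exact IIWins.succ hprev
      (fun h hh a => hh.exists_extension_fst hX hY hYext hε hε1 a)
      (fun h hh b => hh.exists_extension_snd hX hY hXext hε hε1 b)
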